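/- arXiv:1305.3087 — 2 statements merged into one kernel-verified Lean document; each statement's English description precedes it below -/
import Mathlib

section
/- For t ∈ ℝ and a ∈ {0,1}, |Γ((1/2 + it + a)/2)| · e^{πt/4} ≤ max( 2^{1/4} √π (3/2 + max(t,0))^{1/4} exp(1/6), √(2π) exp(π/8 + 1/4) ). -/
/-!
By Euler's product, `Γ(x) / ‖Γ(x + iy)‖ = ∏_{j ≥ 0} ‖x + j + iy‖ / (x + j)`, so that
`2 log (Γ(x) / ‖Γ(x + iy)‖) = ∑_{j ≥ 0} f(x + j)` with `f(u) = log (1 + y² / u²)`. As `f` is convex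
on `u > 0`, the trapezoidal rule bounds this sum below by `f(x) / 2 + ∫_x^∞ f`, and
`∫_x^∞ f = π y - x f(x) - 2 y arctan (x / y)`. Hence
`‖Γ(x + iy)‖ e^{π|y|/2} ≤ Γ(x) exp ((x/2 - 1/4) f(x) + |y| arctan (x / |y|))`, where the exponent is
at most `x` if `x ≤ 1/2` (the case `a = 0`, `x = 1/4`) and at most `(x - 1/2) log (1 + |y|/x) + x`
if `x ≥ 1/2` (the case `a = 1`, `x = 3/4`; for `t < 0` the trivial bound `‖Γ(x + iy)‖ ≤ Γ(x)`
suffices). The constants `Γ(1/4)` and `Γ(3/4)` are bounded by log-convexity of `Γ`, from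
`Γ(2)`, `Γ(5/2)` and `Γ(3/2)`.
-/

open Real Set MeasureTheory Filter Topology

theorem ConvexOn.intervalIntegral_le_trapezoid {f : ℝ → ℝ} {a b : ℝ} (hab : a ≤ b)
    (hf : ConvexOn ℝ (Icc a b) f) (hfi : IntervalIntegrable f volume a b) :
    ∫ u in a..b, f u ≤ (b - a) * ((f a + f b) / 2) := by
  rcases hab.eq_or_lt with rfl | hab
  · simp
  have hchord : ∀ u ∈ Icc a b, (b - a) * f u ≤ (b - u) * f a + (u - a) * f b := by
    rintro u ⟨hau, hub⟩
    rcases hau.eq_or_lt with rfl | hau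
    · nlinarith
    rcases hub.eq_or_lt with rfl | hub
    · nlinarith
    exact hf.secant_mono_aux1 (left_mem_Icc.2 hab.le) (right_mem_Icc.2 hab.le) hau hub
  have hint := intervalIntegral.integral_mono_on hab.le (hfi.const_mul (b - a))
    ((by fun_prop : Continuous fun u => (b - u) * f a + (u - a) * f b).intervalIntegrable _ _)
    hchord
  rw [intervalIntegral.integral_const_mul] at hint
  have hsimp : ∫ u in a..b, ((b - u) * f a + (u - a) * f b) = (b - a) ^ 2 * ((f a + f b) / 2) := by
    have hc {g : ℝ → ℝ} (hg : Continuous g) : IntervalIntegrable g volume a b :=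
      hg.intervalIntegrable a b
    rw [intervalIntegral.integral_add (hc (by fun_prop)) (hc (by fun_prop)),
      intervalIntegral.integral_mul_const, intervalIntegral.integral_mul_const,
      intervalIntegral.integral_sub (hc (by fun_prop)) (hc (by fun_prop)),
      intervalIntegral.integral_sub (hc (by fun_prop)) (hc (by fun_prop))]
    simp only [integral_id, intervalIntegral.integral_const, smul_eq_mul]
    ring
  rw [hsimp] at hint
  have hba : 0 < b - a := by linarith
  nlinarith

theorem ConvexOn.intervalIntegral_add_le_sum {f : ℝ → ℝ} {x : ℝ} (hf : ConvexOn ℝ (Ici x) f)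
    (hfc : ContinuousOn f (Ici x)) (n : ℕ) :
    (∫ u in x..x + n, f u) + (f x + f (x + n)) / 2 ≤ ∑ j ∈ Finset.range (n + 1), f (x + j) := by
  have hint (a b : ℝ) (ha : x ≤ a) (hb : x ≤ b) : IntervalIntegrable f volume a b :=
    (hfc.mono fun u hu => (le_min ha hb).trans hu.1).intervalIntegrable
  induction n with
  | zero =>
    simp only [Nat.cast_zero, add_zero, zero_add, intervalIntegral.integral_same,
      Finset.sum_range_one]
    linarith
  | succ n ih =>
    have hn : x ≤ x + n := by simp
    have hstep := (hf.subset (Icc_subset_Ici_iff (by linarith) |>.2 hn) (convex_Icc _ _)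
      ).intervalIntegral_le_trapezoid (by linarith : x + n ≤ x + n + 1)
      (hint _ _ hn (by linarith))
    rw [add_sub_cancel_left, one_mul] at hstep
    rw [Finset.sum_range_succ, Nat.cast_succ, ← add_assoc,
      ← intervalIntegral.integral_add_adjacent_intervals (b := x + n) (hint _ _ le_rfl hn)
        (hint _ _ hn (by linarith))]
    linarith

theorem Real.mul_arctan_div_le {x y : ℝ} (hx : 0 ≤ x) (hy : 0 ≤ y) : y * arctan (x / y) ≤ x := by
  rcases hy.eq_or_lt with rfl | hy
  · simpa using hx
  have harctan : arctan (x / y) ≤ x / y := by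
    simpa [tan_arctan] using le_tan (arctan_nonneg.2 (by positivity)) (arctan_lt_pi_div_two _)
  calc y * arctan (x / y) ≤ y * (x / y) := by gcongr
    _ = x := by field_simp

theorem Real.Gamma_add_div_two_sq_le_mul {s t : ℝ} (hs : 0 < s) (ht : 0 < t) :
    Real.Gamma ((s + t) / 2) ^ 2 ≤ Real.Gamma s * Real.Gamma t := by
  have h := Real.Gamma_mul_add_mul_le_rpow_Gamma_mul_rpow_Gamma hs ht one_half_pos one_half_pos
    (by norm_num)
  rw [← mul_rpow (Real.Gamma_pos_of_pos hs).le (Real.Gamma_pos_of_pos ht).le, ← sqrt_eq_rpow,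
    show 1 / 2 * s + 1 / 2 * t = (s + t) / 2 by ring] at h
  exact (le_sqrt (Real.Gamma_pos_of_pos (by positivity)).le (by positivity)).1 h

namespace GammaBound

/-- `log (1 + y² / u²)` for `u > 0`, written so as to be differentiable in `u` without division. -/
noncomputable def logRatio (y u : ℝ) : ℝ := log (u ^ 2 + y ^ 2) - 2 * log u

noncomputable def logRatioPrimitive (y u : ℝ) : ℝ := u * logRatio y u + 2 * y * arctan (u / y)

variable {y u : ℝ}

theorem logRatio_eq_log_div (hu : 0 < u) : logRatio y u = log ((u ^ 2 + y ^ 2) / u ^ 2) := by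
  rw [logRatio, log_div (by positivity) (by positivity), log_pow]
  push_cast
  ring

theorem logRatio_nonneg (hu : 0 < u) : 0 ≤ logRatio y u := by
  rw [logRatio_eq_log_div hu]
  exact log_nonneg ((one_le_div (by positivity)).2 (by nlinarith))

theorem logRatio_le_sq_div (hu : 0 < u) : logRatio y u ≤ y ^ 2 / u ^ 2 := by
  rw [logRatio_eq_log_div hu]
  have hpos : 0 < (u ^ 2 + y ^ 2) / u ^ 2 := by positivity
  calc log ((u ^ 2 + y ^ 2) / u ^ 2) ≤ (u ^ 2 + y ^ 2) / u ^ 2 - 1 := log_le_sub_one_of_pos hpos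
    _ = y ^ 2 / u ^ 2 := by field_simp; ring

theorem logRatio_le_two_mul_log {x : ℝ} (hx : 0 < x) (hy : 0 ≤ y) :
    logRatio y x ≤ 2 * log (1 + y / x) := by
  rw [logRatio_eq_log_div hx, show 2 * log (1 + y / x) = log ((1 + y / x) ^ 2) by
    rw [log_pow, Nat.cast_ofNat]]
  gcongr
  rw [div_le_iff₀ (by positivity)]
  field_simp
  nlinarith

theorem norm_ofReal_add_mul_I (hu : 0 < u) :
    ‖(u : ℂ) + y * Complex.I‖ = u * exp (logRatio y u / 2) := by
  rw [← sq_eq_sq₀ (norm_nonneg _) (by positivity), Complex.sq_norm, Complex.normSq_add_mul_I,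
    mul_pow, ← exp_nat_mul, logRatio_eq_log_div hu, Nat.cast_ofNat, mul_div_cancel₀ _ two_ne_zero,
    exp_log (by positivity)]
  field_simp

theorem hasDerivAt_logRatio (hu : 0 < u) :
    HasDerivAt (logRatio y) (2 * u / (u ^ 2 + y ^ 2) - 2 / u) u := by
  have hsq : HasDerivAt (fun u : ℝ => u ^ 2 + y ^ 2) (2 * u) u := by
    simpa using (hasDerivAt_pow 2 u).add_const (y ^ 2)
  have hlog : HasDerivAt (fun u : ℝ => 2 * log u) (2 / u) u := by
    simpa [div_eq_mul_inv] using (hasDerivAt_log hu.ne').const_mul 2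
  exact (hsq.log (by positivity)).sub hlog

theorem continuousOn_logRatio (y : ℝ) : ContinuousOn (logRatio y) (Ioi 0) :=
  fun _ hu => (hasDerivAt_logRatio hu).continuousAt.continuousWithinAt

theorem convexOn_logRatio (y : ℝ) : ConvexOn ℝ (Ioi 0) (logRatio y) := by
  have hderiv2 {u : ℝ} (hu : 0 < u) : HasDerivAt (fun u => 2 * u / (u ^ 2 + y ^ 2) - 2 / u)
      (2 * (y ^ 2 - u ^ 2) / (u ^ 2 + y ^ 2) ^ 2 + 2 / u ^ 2) u := by
    have hsq : HasDerivAt (fun u : ℝ => u ^ 2 + y ^ 2) (2 * u) u := by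
      simpa using (hasDerivAt_pow 2 u).add_const (y ^ 2)
    have hinv : HasDerivAt (fun u : ℝ => 2 / u) (-(2 / u ^ 2)) u := by
      simpa [div_eq_mul_inv] using (hasDerivAt_inv hu.ne').const_mul 2
    have hlin : HasDerivAt (fun u : ℝ => 2 * u) 2 u := by
      simpa using (hasDerivAt_id u).const_mul 2
    exact ((hlin.div hsq (by positivity)).sub hinv).congr_deriv (by ring)
  refine convexOn_of_hasDerivWithinAt2_nonneg (f' := fun u => 2 * u / (u ^ 2 + y ^ 2) - 2 / u)
    (f'' := fun u => 2 * (y ^ 2 - u ^ 2) / (u ^ 2 + y ^ 2) ^ 2 + 2 / u ^ 2) (convex_Ioi 0)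
    (fun u hu => (hasDerivAt_logRatio hu).continuousAt.continuousWithinAt) ?_ ?_ ?_ <;>
    simp only [interior_Ioi, mem_Ioi]
  · exact fun u hu => (hasDerivAt_logRatio hu).hasDerivWithinAt
  · exact fun u hu => (hderiv2 hu).hasDerivWithinAt
  intro u hu
  rw [div_add_div _ _ (by positivity) (by positivity)]
  refine div_nonneg ?_ (by positivity)
  nlinarith [sq_nonneg (u ^ 2 - y ^ 2), sq_nonneg u, sq_nonneg y, sq_nonneg (u * y)]

theorem hasDerivAt_logRatioPrimitive (hy : y ≠ 0) (hu : 0 < u) :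
    HasDerivAt (logRatioPrimitive y) (logRatio y u) u := by
  have harctan : HasDerivAt (fun u => arctan (u / y)) (1 / (1 + (u / y) ^ 2) * (1 / y)) u :=
    ((hasDerivAt_id' u).div_const y).arctan
  refine (((hasDerivAt_id' u).mul (hasDerivAt_logRatio hu)).add
    (harctan.const_mul (2 * y))).congr_deriv ?_
  field_simp
  ring

theorem tendsto_logRatioPrimitive_atTop (hy : 0 < y) :
    Tendsto (logRatioPrimitive y) atTop (𝓝 (π * y)) := by
  have hlog : Tendsto (fun u => u * logRatio y u) atTop (𝓝 0) := by
    refine tendsto_of_tendsto_of_tendsto_of_le_of_le' tendsto_const_nhds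
      (tendsto_const_nhds.div_atTop tendsto_id : Tendsto (fun u => y ^ 2 / u) atTop (𝓝 0)) ?_ ?_
    · filter_upwards [eventually_gt_atTop 0] with u hu
      exact mul_nonneg hu.le (logRatio_nonneg hu)
    · filter_upwards [eventually_gt_atTop 0] with u hu
      calc u * logRatio y u ≤ u * (y ^ 2 / u ^ 2) :=
            mul_le_mul_of_nonneg_left (logRatio_le_sq_div hu) hu.le
        _ = y ^ 2 / u := by field_simp
  have harctan : Tendsto (fun u => 2 * y * arctan (u / y)) atTop (𝓝 (2 * y * (π / 2))) :=
    ((tendsto_arctan_atTop.mono_right nhdsWithin_le_nhds).comp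
      (tendsto_id.atTop_div_const hy)).const_mul _
  rw [show π * y = 0 + 2 * y * (π / 2) by ring]
  exact hlog.add harctan

theorem integral_logRatio {a b : ℝ} (hy : y ≠ 0) (ha : 0 < a) (hab : a ≤ b) :
    ∫ u in a..b, logRatio y u = logRatioPrimitive y b - logRatioPrimitive y a := by
  have hpos : ∀ u ∈ uIcc a b, 0 < u := fun u hu => ha.trans_le (by
    rw [uIcc_of_le hab] at hu; exact hu.1)
  refine intervalIntegral.integral_eq_sub_of_hasDerivAt
    (fun u hu => hasDerivAt_logRatioPrimitive hy (hpos u hu)) ?_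
  exact ((continuousOn_logRatio y).mono hpos).intervalIntegrable

theorem norm_GammaSeq_mul_exp {x : ℝ} (hx : 0 < x) (y : ℝ) (n : ℕ) :
    ‖Complex.GammaSeq (x + y * Complex.I) n‖ *
      exp ((∑ j ∈ Finset.range (n + 1), logRatio y (x + j)) / 2) = Real.GammaSeq x n := by
  have hterm (j : ℕ) : ‖(x + y * Complex.I) + j‖ = (x + j) * exp (logRatio y (x + j) / 2) := by
    rw [← norm_ofReal_add_mul_I (by positivity)]
    push_cast
    ring_nf
  have hprod : 0 < ∏ j ∈ Finset.range (n + 1), (x + j) :=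
    Finset.prod_pos fun j _ => by positivity
  rw [Complex.GammaSeq, Real.GammaSeq, norm_div, norm_mul, norm_prod, Finset.prod_congr rfl
    fun j _ => hterm j, Finset.prod_mul_distrib, ← exp_sum, ← Finset.sum_div,
    Complex.norm_natCast_cpow_of_re_ne_zero _ (by simpa using hx.ne'), Complex.norm_natCast]
  simp only [Complex.add_re, Complex.ofReal_re, Complex.mul_re, Complex.ofReal_im,
    Complex.I_re, Complex.I_im, mul_zero, mul_one, sub_zero, add_zero]
  field_simp

theorem sum_logRatio_ge {x : ℝ} (hx : 0 < x) (hy : y ≠ 0) (n : ℕ) :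
    logRatio y x / 2 + (logRatioPrimitive y (x + n) - logRatioPrimitive y x) ≤
      ∑ j ∈ Finset.range (n + 1), logRatio y (x + j) := by
  have hsub : Ici x ⊆ Ioi 0 := fun u hu => hx.trans_le hu
  have h := ((convexOn_logRatio y).subset hsub (convex_Ici x)).intervalIntegral_add_le_sum
    ((continuousOn_logRatio y).mono hsub) n
  rw [integral_logRatio hy hx (by simp)] at h
  linarith [logRatio_nonneg (y := y) (by positivity : 0 < x + n)]

noncomputable def stirlingExponent (x y : ℝ) : ℝ :=
  (x / 2 - 1 / 4) * logRatio y x + y * arctan (x / y)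

theorem norm_Gamma_mul_exp_le_of_pos {x : ℝ} (hx : 0 < x) (hy : 0 < y) :
    ‖Complex.Gamma (x + y * Complex.I)‖ * exp (π * y / 2) ≤
      Real.Gamma x * exp (stirlingExponent x y) := by
  set c := logRatio y x / 2 - logRatioPrimitive y x
  have hlim : ‖Complex.Gamma (x + y * Complex.I)‖ * exp ((c + π * y) / 2) ≤ Real.Gamma x := by
    have hprim : Tendsto (fun n : ℕ => logRatioPrimitive y (x + n)) atTop (𝓝 (π * y)) :=
      (tendsto_logRatioPrimitive_atTop hy).comp
        (tendsto_atTop_add_const_left _ x tendsto_natCast_atTop_atTop)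
    refine le_of_tendsto_of_tendsto
      ((Complex.GammaSeq_tendsto_Gamma _).norm.mul
        ((continuous_exp.tendsto _).comp ((hprim.const_add c).div_const 2)))
      (Real.GammaSeq_tendsto_Gamma x) (Eventually.of_forall fun n => ?_)
    rw [← norm_GammaSeq_mul_exp hx y n]
    refine mul_le_mul_of_nonneg_left (exp_le_exp.2 ?_) (norm_nonneg _)
    simp only [c]
    linarith [sum_logRatio_ge hx hy.ne' n]
  calc ‖Complex.Gamma (x + y * Complex.I)‖ * exp (π * y / 2)
      = ‖Complex.Gamma (x + y * Complex.I)‖ * exp ((c + π * y) / 2) *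
          exp (stirlingExponent x y) := by
        rw [mul_assoc, ← exp_add]
        congr 2
        simp only [c, stirlingExponent, logRatioPrimitive]
        ring
    _ ≤ Real.Gamma x * exp (stirlingExponent x y) := by gcongr

theorem norm_Gamma_ofReal_add_mul_I_abs (x y : ℝ) :
    ‖Complex.Gamma (x + y * Complex.I)‖ = ‖Complex.Gamma (x + |y| * Complex.I)‖ := by
  rcases le_total 0 y with hy | hy
  · rw [abs_of_nonneg hy]
  · have hconj : (x + y * Complex.I : ℂ) = (starRingEnd ℂ) (x + |y| * Complex.I) := by
      rw [abs_of_nonpos hy]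
      simp [Complex.conj_ofReal]
    rw [hconj, Complex.Gamma_conj, Complex.norm_conj]

theorem stirlingExponent_zero (x : ℝ) : stirlingExponent x 0 = 0 := by
  simp [stirlingExponent, logRatio, log_pow]

theorem norm_Gamma_mul_exp_le {x : ℝ} (hx : 0 < x) (y : ℝ) :
    ‖Complex.Gamma (x + y * Complex.I)‖ * exp (π * |y| / 2) ≤
      Real.Gamma x * exp (stirlingExponent x |y|) := by
  rw [norm_Gamma_ofReal_add_mul_I_abs]
  rcases (abs_nonneg y).eq_or_lt with hy | hy
  · rw [← hy, stirlingExponent_zero]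
    simp [Complex.Gamma_ofReal, abs_of_pos (Real.Gamma_pos_of_pos hx)]
  · exact norm_Gamma_mul_exp_le_of_pos hx hy

theorem stirlingExponent_le_of_le_half {x : ℝ} (hx : 0 < x) (hx' : x ≤ 1 / 2) (hy : 0 ≤ y) :
    stirlingExponent x y ≤ x := by
  have hlog := mul_nonpos_of_nonpos_of_nonneg (by linarith : x / 2 - 1 / 4 ≤ 0)
    (logRatio_nonneg hx (y := y))
  unfold stirlingExponent
  linarith [mul_arctan_div_le hx.le hy]

theorem stirlingExponent_le_of_half_le {x : ℝ} (hx : 1 / 2 ≤ x) (hy : 0 ≤ y) :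
    stirlingExponent x y ≤ (x - 1 / 2) * log (1 + y / x) + x := by
  have hx0 : 0 < x := by linarith
  have hlog := mul_le_mul_of_nonneg_left (logRatio_le_two_mul_log hx0 hy)
    (by linarith : 0 ≤ x / 2 - 1 / 4)
  unfold stirlingExponent
  linarith [mul_arctan_div_le hx0.le hy]

theorem norm_Gamma_mul_exp_le_of_le_half {x : ℝ} (hx : 0 < x) (hx' : x ≤ 1 / 2) (y : ℝ) :
    ‖Complex.Gamma (x + y * Complex.I)‖ * exp (π * |y| / 2) ≤ Real.Gamma x * exp x :=
  (norm_Gamma_mul_exp_le hx y).trans <| by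
    gcongr
    exact stirlingExponent_le_of_le_half hx hx' (abs_nonneg y)

theorem norm_Gamma_mul_exp_le_of_half_le {x : ℝ} (hx : 1 / 2 ≤ x) (y : ℝ) :
    ‖Complex.Gamma (x + y * Complex.I)‖ * exp (π * |y| / 2) ≤
      Real.Gamma x * (1 + |y| / x) ^ (x - 1 / 2) * exp x := by
  have hx0 : 0 < x := by linarith
  refine (norm_Gamma_mul_exp_le hx0 y).trans ?_
  rw [rpow_def_of_pos (by positivity), mul_assoc, ← exp_add, mul_comm (log _)]
  gcongr
  exact stirlingExponent_le_of_half_le hx (abs_nonneg y)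

theorem norm_Gamma_le {x : ℝ} (hx : 0 < x) (y : ℝ) :
    ‖Complex.Gamma (x + y * Complex.I)‖ ≤ Real.Gamma x := by
  refine le_of_tendsto_of_tendsto (Complex.GammaSeq_tendsto_Gamma _).norm
    (Real.GammaSeq_tendsto_Gamma x) (Eventually.of_forall fun n => ?_)
  rw [← norm_GammaSeq_mul_exp hx y n]
  refine le_mul_of_one_le_right (norm_nonneg _) (one_le_exp ?_)
  exact div_nonneg (Finset.sum_nonneg fun j _ => logRatio_nonneg (by positivity)) zero_le_two

theorem Gamma_three_halves : Real.Gamma (3 / 2) = √π / 2 := by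
  rw [show (3 / 2 : ℝ) = 1 / 2 + 1 by norm_num, Real.Gamma_add_one (by norm_num),
    Real.Gamma_one_half_eq]
  ring

theorem Gamma_one_quarter_sq_le : Real.Gamma (1 / 4) ^ 2 ≤ 192 / 25 * √π := by
  have h := Real.Gamma_add_div_two_sq_le_mul (s := 2) (t := 5 / 2) (by norm_num) (by norm_num)
  rw [show ((2 : ℝ) + 5 / 2) / 2 = 1 / 4 + 1 + 1 by norm_num, Real.Gamma_add_one (by norm_num),
    Real.Gamma_add_one (by norm_num), Real.Gamma_two, show (5 / 2 : ℝ) = 3 / 2 + 1 by norm_num,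
    Real.Gamma_add_one (by norm_num), Gamma_three_halves] at h
  nlinarith

theorem Gamma_three_quarters_sq_le : Real.Gamma (3 / 4) ^ 2 ≤ 8 / 9 * √π := by
  have h := Real.Gamma_add_div_two_sq_le_mul (s := 3 / 2) (t := 2) (by norm_num) (by norm_num)
  rw [show ((3 : ℝ) / 2 + 2) / 2 = 3 / 4 + 1 by norm_num, Real.Gamma_add_one (by norm_num),
    Real.Gamma_two, Gamma_three_halves] at h
  nlinarith

theorem exp_pi_div_four_gt : 2.17 < exp (π / 4) := by
  have hpi : 0.785 < π / 4 := by linarith [pi_gt_d2]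
  have h := sum_le_exp_of_nonneg (by positivity : 0 ≤ π / 4) 4
  simp only [Finset.sum_range_succ, Finset.sum_range_zero, Nat.factorial] at h
  norm_num at h
  nlinarith [pow_lt_pow_left₀ hpi (by norm_num) (two_ne_zero),
    pow_lt_pow_left₀ hpi (by norm_num) (three_ne_zero)]

theorem Gamma_one_quarter_le : Real.Gamma (1 / 4) ≤ √(2 * π) * exp (π / 8) := by
  have hsqrt : 1.772 ≤ √π := le_sqrt_of_sq_le (by linarith [pi_gt_d2])
  have hsq : √π ^ 2 = π := sq_sqrt pi_pos.le
  rw [← pow_le_pow_iff_left₀ (Real.Gamma_pos_of_pos (by norm_num)).le (by positivity) two_ne_zero,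
    mul_pow, sq_sqrt (by positivity), ← exp_nat_mul]
  refine Gamma_one_quarter_sq_le.trans ?_
  rw [show ((2 : ℕ) : ℝ) * (π / 8) = π / 4 by push_cast; ring]
  nlinarith [exp_pi_div_four_gt, sqrt_nonneg π]

theorem rpow_one_div_four_pow_four {r : ℝ} (hr : 0 ≤ r) : (r ^ ((1 : ℝ) / 4)) ^ 4 = r := by
  rw [← rpow_natCast, ← rpow_mul hr]
  norm_num

theorem exp_three_lt : exp 3 < 20.09 := by
  have h : exp 3 = exp 1 ^ 3 := by rw [← exp_nat_mul]; norm_num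
  rw [h]
  nlinarith [exp_one_lt_d9, exp_pos 1, pow_lt_pow_left₀ exp_one_lt_d9 (exp_pos 1).le three_ne_zero]

theorem Gamma_three_quarters_mul_le :
    Real.Gamma (3 / 4) * (2 / 3) ^ ((1 : ℝ) / 4) * exp (3 / 4) ≤
      2 ^ ((1 : ℝ) / 4) * √π * exp (1 / 6) := by
  rw [← pow_le_pow_iff_left₀ (by positivity) (by positivity) four_ne_zero]
  simp only [mul_pow, rpow_one_div_four_pow_four (by norm_num : (0 : ℝ) ≤ 2 / 3),
    rpow_one_div_four_pow_four (by norm_num : (0 : ℝ) ≤ 2), ← exp_nat_mul]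
  have hGamma : Real.Gamma (3 / 4) ^ 4 ≤ 64 / 81 * π := by
    have h := pow_le_pow_left₀ (sq_nonneg _) Gamma_three_quarters_sq_le 2
    rw [← pow_mul, mul_pow, sq_sqrt pi_pos.le] at h
    linarith
  have hexp : 17 / 9 ≤ exp (2 / 3) := by
    have := quadratic_le_exp_of_nonneg (by norm_num : (0 : ℝ) ≤ 2 / 3)
    norm_num at this
    linarith
  have hsqrt : √π ^ 4 = π ^ 2 := by rw [show 4 = 2 * 2 by rfl, pow_mul, sq_sqrt pi_pos.le]
  norm_num [hsqrt]
  nlinarith [exp_three_lt, pi_gt_d2, exp_pos 3, exp_pos (2 / 3)]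

theorem Gamma_three_quarters_mul_rpow_le {c : ℝ} (hc : 0 < c) :
    Real.Gamma (3 / 4) * (2 / 3 * c) ^ ((1 : ℝ) / 4) * exp (3 / 4) ≤
      2 ^ ((1 : ℝ) / 4) * √π * c ^ ((1 : ℝ) / 4) * exp (1 / 6) := by
  rw [mul_rpow (by norm_num) hc.le]
  calc Real.Gamma (3 / 4) * ((2 / 3) ^ ((1 : ℝ) / 4) * c ^ ((1 : ℝ) / 4)) * exp (3 / 4)
      = Real.Gamma (3 / 4) * (2 / 3) ^ ((1 : ℝ) / 4) * exp (3 / 4) * c ^ ((1 : ℝ) / 4) := by ring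
    _ ≤ 2 ^ ((1 : ℝ) / 4) * √π * exp (1 / 6) * c ^ ((1 : ℝ) / 4) :=
        mul_le_mul_of_nonneg_right Gamma_three_quarters_mul_le (by positivity)
    _ = 2 ^ ((1 : ℝ) / 4) * √π * c ^ ((1 : ℝ) / 4) * exp (1 / 6) := by ring

theorem norm_Gamma_one_quarter_add_mul_I_mul_exp_le (t : ℝ) :
    ‖Complex.Gamma (((1 / 4 : ℝ) : ℂ) + ((t / 2 : ℝ) : ℂ) * Complex.I)‖ * exp (π * t / 4) ≤
      √(2 * π) * exp (π / 8 + 1 / 4) := by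
  calc ‖Complex.Gamma (((1 / 4 : ℝ) : ℂ) + ((t / 2 : ℝ) : ℂ) * Complex.I)‖ * exp (π * t / 4)
      ≤ ‖Complex.Gamma (((1 / 4 : ℝ) : ℂ) + ((t / 2 : ℝ) : ℂ) * Complex.I)‖ *
          exp (π * |t / 2| / 2) := by
        gcongr ?_ * exp ?_
        linarith [mul_le_mul_of_nonneg_left (le_abs_self (t / 2)) pi_pos.le]
    _ ≤ Real.Gamma (1 / 4) * exp (1 / 4) :=
        norm_Gamma_mul_exp_le_of_le_half (by norm_num) (by norm_num) _
    _ ≤ √(2 * π) * exp (π / 8) * exp (1 / 4) := by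
        gcongr
        exact Gamma_one_quarter_le
    _ = √(2 * π) * exp (π / 8 + 1 / 4) := by rw [mul_assoc, ← exp_add]

theorem norm_Gamma_three_quarters_add_mul_I_mul_exp_le (t : ℝ) :
    ‖Complex.Gamma (((3 / 4 : ℝ) : ℂ) + ((t / 2 : ℝ) : ℂ) * Complex.I)‖ * exp (π * t / 4) ≤
      2 ^ ((1 : ℝ) / 4) * √π * (3 / 2 + max t 0) ^ ((1 : ℝ) / 4) * exp (1 / 6) := by
  refine le_trans ?_ (Gamma_three_quarters_mul_rpow_le (by positivity))
  rcases le_or_gt 0 t with ht | ht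
  · have h := norm_Gamma_mul_exp_le_of_half_le (x := 3 / 4) (by norm_num) (t / 2)
    rw [abs_of_nonneg (by linarith : 0 ≤ t / 2), show π * (t / 2) / 2 = π * t / 4 by ring,
      show 1 + t / 2 / (3 / 4) = 2 / 3 * (3 / 2 + t) by ring,
      show (3 / 4 : ℝ) - 1 / 2 = 1 / 4 by norm_num] at h
    rwa [max_eq_left ht]
  · rw [max_eq_right ht.le, show (2 / 3 * (3 / 2 + 0) : ℝ) = 1 by norm_num, one_rpow, mul_one]
    calc ‖Complex.Gamma (((3 / 4 : ℝ) : ℂ) + ((t / 2 : ℝ) : ℂ) * Complex.I)‖ * exp (π * t / 4)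
        ≤ Real.Gamma (3 / 4) * 1 :=
          mul_le_mul (norm_Gamma_le (by norm_num) _) (exp_le_one_iff.2 (by nlinarith [pi_pos]))
            (exp_pos _).le (Real.Gamma_pos_of_pos (by norm_num)).le
      _ ≤ Real.Gamma (3 / 4) * exp (3 / 4) := by gcongr; exact one_le_exp (by norm_num)

end GammaBound

open Complex

/-- Stirling-type bound: for `t ∈ ℝ` and `a ∈ {0,1}`,
`|Γ((1/2+it+a)/2)| e^{πt/4} ≤ max(2^{1/4}√π (3/2+max(t,0))^{1/4} e^{1/6}, √(2π) e^{π/8+1/4})`. -/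
theorem gamma_bound (t : ℝ) (a : ℕ) (ha : a = 0 ∨ a = 1) :
    ‖Complex.Gamma ((1 / 2 + Complex.I * t + a) / 2)‖ * Real.exp (Real.pi * t / 4) ≤
      max ((2 : ℝ) ^ ((1 : ℝ) / 4) * Real.sqrt Real.pi *
            (3 / 2 + max t 0) ^ ((1 : ℝ) / 4) * Real.exp (1 / 6))
          (Real.sqrt (2 * Real.pi) * Real.exp (Real.pi / 8 + 1 / 4)) := by
  rcases ha with rfl | rfl
  · rw [show (1 / 2 + I * t + ((0 : ℕ) : ℂ)) / 2 = ((1 / 4 : ℝ) : ℂ) + ((t / 2 : ℝ) : ℂ) * I by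
      push_cast; ring]
    exact le_max_of_le_right (GammaBound.norm_Gamma_one_quarter_add_mul_I_mul_exp_le t)
  · rw [show (1 / 2 + I * t + ((1 : ℕ) : ℂ)) / 2 = ((3 / 4 : ℝ) : ℂ) + ((t / 2 : ℝ) : ℂ) * I by
      push_cast; ring]
    exact le_max_of_le_left (GammaBound.norm_Gamma_three_quarters_add_mul_I_mul_exp_le t)
end

section
/- For all real t ≥ 0 and h > 0, the integral P(t₀,h) := ∫_{-∞}^∞ |Γ((3+it)/2)| exp(πt/4) exp(-(t-t₀)²/(2h²)) dt satisfies P(t₀,h) ≤ hπ ( t₀ + h/√(2π) + 1 + 1/(2√2) ), where t₀ ≥ 0. -/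
/-!
By the functional equation and the reflection formula,
`|Γ((3+it)/2)|² e^{πt/2} = (π/2) (1+t²) / (1+e^{-πt})`. For `t ≥ 0` this is at most
`(π/2)(1+t)²`; for `t < 0` it is at most `(π/2)((1-t)e^{πt/2})²`, and
`-t e^{πt/2} ≤ 2/(eπ) < 1/(2√2)`.
So the weight is bounded by `√(π/2)` times `t₀ + 1 + 1/(2√2) + (t - t₀)⁺`, and integrating
against the Gaussian (mass `h√(2π)`, positive first moment `h²`) gives the bound.
-/

open Complex MeasureTheory Set ComplexConjugate
open scoped Real

lemma norm_Gamma_one_add_I_mul_div_two_sq (t : ℝ) :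
    ‖Gamma ((1 + I * t) / 2)‖ ^ 2 = π / Real.cosh (π * t / 2) := by
  set z : ℂ := (1 + I * t) / 2
  have hconj : conj z = 1 - z := by
    simp only [z, map_div₀, map_add, map_mul, map_one, conj_I, conj_ofReal, map_ofNat]
    ring
  have hsin : sin (π * z) = Real.cosh (π * t / 2) := by
    have : (π : ℂ) * z = ↑(π / 2) + ↑(π * t / 2) * I := by simp only [z]; push_cast; ring
    rw [this, sin_add_mul_I, ← ofReal_sin, ← ofReal_cos, Real.sin_pi_div_two,
      Real.cos_pi_div_two, ofReal_cosh]
    simp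
  have h := Gamma_mul_Gamma_one_sub z
  rw [← hconj, Gamma_conj, mul_conj, hsin] at h
  rw [Complex.sq_norm]
  exact_mod_cast h

lemma norm_Gamma_three_add_I_mul_div_two_sq (t : ℝ) :
    ‖Gamma ((3 + I * t) / 2)‖ ^ 2 = (1 + t ^ 2) / 4 * (π / Real.cosh (π * t / 2)) := by
  have hne : (1 + I * t) / 2 ≠ 0 := by
    intro h
    simpa using congrArg re h
  have hnorm : ‖(1 + I * t) / 2‖ ^ 2 = (1 + t ^ 2) / 4 := by
    rw [Complex.sq_norm, normSq_div, mul_comm I, ← ofReal_one, normSq_add_mul_I]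
    norm_num
  rw [show (3 + I * t) / 2 = (1 + I * t) / 2 + 1 by ring, Gamma_add_one _ hne, norm_mul, mul_pow,
    hnorm, norm_Gamma_one_add_I_mul_div_two_sq]

lemma sq_norm_Gamma_mul_exp (t : ℝ) :
    (‖Gamma ((3 + I * t) / 2)‖ * Real.exp (π * t / 4)) ^ 2
      = π / 2 * ((1 + t ^ 2) / (1 + Real.exp (-(π * t)))) := by
  have hsq : Real.exp (π * t / 4) ^ 2 = Real.exp (π * t / 2) := by
    rw [← Real.exp_nat_mul]; ring_nf
  have hneg : Real.exp (-(π * t)) = Real.exp (-(π * t / 2)) ^ 2 := by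
    rw [← Real.exp_nat_mul]; ring_nf
  rw [mul_pow, norm_Gamma_three_add_I_mul_div_two_sq, hsq, hneg, Real.cosh_eq, Real.exp_neg]
  field_simp
  ring

lemma neg_mul_exp_pi_mul_div_two_le (t : ℝ) : -t * Real.exp (π * t / 2) ≤ 1 / (2 * √2) := by
  have h := Real.mul_exp_neg_le_exp_neg_one (-(π * t / 2))
  rw [neg_neg, Real.exp_neg] at h
  have he : 2 ≤ Real.exp 1 := by linarith [Real.add_one_le_exp 1]
  have hs : √2 ≤ 3 / 2 := by
    rw [Real.sqrt_le_left (by norm_num)]; norm_num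
  have hs0 : 0 < √2 := by positivity
  have hle : -t * Real.exp (π * t / 2) ≤ 2 / (π * Real.exp 1) := by
    rw [le_div_iff₀ (by positivity)]
    have := mul_le_mul_of_nonneg_right h (Real.exp_pos 1).le
    rw [inv_mul_cancel₀ (Real.exp_pos 1).ne'] at this
    nlinarith [Real.pi_pos]
  refine hle.trans ?_
  rw [div_le_div_iff₀ (by positivity) (by positivity)]
  nlinarith [Real.pi_gt_three]

lemma one_add_sq_div_one_add_exp_le (t : ℝ) :
    (1 + t ^ 2) / (1 + Real.exp (-(π * t))) ≤ (1 + max t 0 + 1 / (2 * √2)) ^ 2 := by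
  have hc : 0 ≤ 1 / (2 * √2) := by positivity
  rcases le_or_gt 0 t with ht | ht
  · calc (1 + t ^ 2) / (1 + Real.exp (-(π * t))) ≤ 1 + t ^ 2 :=
          div_le_self (by positivity) (by linarith [Real.exp_pos (-(π * t))])
      _ ≤ (1 + max t 0 + 1 / (2 * √2)) ^ 2 := by
          rw [max_eq_left ht]; nlinarith
  · have hexp : Real.exp (-(π * t)) = (Real.exp (π * t / 2) ^ 2)⁻¹ := by
      rw [← Real.exp_nat_mul, ← Real.exp_neg]; ring_nf
    have hE1 : Real.exp (π * t / 2) ≤ 1 := Real.exp_le_one_iff.mpr (by nlinarith [Real.pi_pos])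
    have key := neg_mul_exp_pi_mul_div_two_le t
    calc (1 + t ^ 2) / (1 + Real.exp (-(π * t)))
        ≤ (1 + t ^ 2) / Real.exp (-(π * t)) :=
          div_le_div_of_nonneg_left (by positivity) (Real.exp_pos _) (by linarith)
      _ ≤ ((1 - t) * Real.exp (π * t / 2)) ^ 2 := by
          rw [hexp, div_inv_eq_mul, mul_pow]; gcongr; nlinarith
      _ ≤ (1 + max t 0 + 1 / (2 * √2)) ^ 2 := by
          rw [max_eq_right ht.le]
          gcongr
          · nlinarith [Real.exp_pos (π * t / 2)]
          · nlinarith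

lemma norm_Gamma_mul_exp_le (t : ℝ) :
    ‖Gamma ((3 + I * t) / 2)‖ * Real.exp (π * t / 4)
      ≤ √(π / 2) * (1 + max t 0 + 1 / (2 * √2)) := by
  refine le_of_pow_le_pow_left₀ two_ne_zero (by positivity) ?_
  rw [sq_norm_Gamma_mul_exp, mul_pow, Real.sq_sqrt (by positivity)]
  gcongr
  exact one_add_sq_div_one_add_exp_le t

lemma integral_posPart_mul_exp_neg_mul_sq {b : ℝ} (hb : 0 < b) :
    ∫ x : ℝ, max x 0 * Real.exp (-b * x ^ 2) = (2 * b)⁻¹ := by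
  have hIoi : ∫ x in Ioi (0 : ℝ), x * Real.exp (-b * x ^ 2) = (2 * b)⁻¹ := by
    have h := integral_mul_cexp_neg_mul_sq (b := (b : ℂ)) (by simpa using hb)
    apply ofReal_injective
    rw [← integral_complex_ofReal]
    push_cast
    exact h
  have hind : (fun x : ℝ => max x 0 * Real.exp (-b * x ^ 2))
      = (Ioi 0).indicator (fun x => x * Real.exp (-b * x ^ 2)) := by
    ext x
    rcases le_or_gt x 0 with hx | hx
    · simp [max_eq_right hx, hx.not_gt]
    · simp [max_eq_left hx.le, hx]
  rw [hind, integral_indicator measurableSet_Ioi, hIoi]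

lemma integrable_posPart_mul_exp_neg_mul_sq {b : ℝ} (hb : 0 < b) :
    Integrable fun x : ℝ => max x 0 * Real.exp (-b * x ^ 2) := by
  refine (integrable_mul_exp_neg_mul_sq hb).abs.mono' (by fun_prop) (.of_forall fun x => ?_)
  rw [Real.norm_eq_abs, abs_mul, abs_mul, abs_of_nonneg (le_max_right x 0)]
  gcongr
  exact max_le (le_abs_self x) (abs_nonneg x)

section Gaussian

variable (a t₀ : ℝ) {h : ℝ}

lemma exp_neg_sq_div_eq (x : ℝ) :
    Real.exp (-x ^ 2 / (2 * h ^ 2)) = Real.exp (-(2 * h ^ 2)⁻¹ * x ^ 2) := by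
  ring_nf

lemma integrable_add_posPart_mul_gaussian (hh : h ≠ 0) :
    Integrable fun t => (a + max (t - t₀) 0) * Real.exp (-(t - t₀) ^ 2 / (2 * h ^ 2)) := by
  have hb : 0 < (2 * h ^ 2)⁻¹ := by positivity
  simp_rw [exp_neg_sq_div_eq, add_mul]
  exact ((integrable_exp_neg_mul_sq hb).const_mul a).add
    (integrable_posPart_mul_exp_neg_mul_sq hb) |>.comp_sub_right t₀

lemma integral_add_posPart_mul_gaussian (hh : 0 < h) :
    ∫ t, (a + max (t - t₀) 0) * Real.exp (-(t - t₀) ^ 2 / (2 * h ^ 2))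
      = a * (h * √(2 * π)) + h ^ 2 := by
  have hb : 0 < (2 * h ^ 2)⁻¹ := by positivity
  simp_rw [exp_neg_sq_div_eq]
  rw [integral_sub_right_eq_self (fun x => (a + max x 0) * Real.exp (-(2 * h ^ 2)⁻¹ * x ^ 2))]
  simp_rw [add_mul]
  rw [integral_add ((integrable_exp_neg_mul_sq hb).const_mul a)
      (integrable_posPart_mul_exp_neg_mul_sq hb), integral_const_mul, integral_gaussian,
    show π / (2 * h ^ 2)⁻¹ = h ^ 2 * (2 * π) by field_simp, Real.sqrt_mul (sq_nonneg h),
    Real.sqrt_sq hh.le, integral_posPart_mul_exp_neg_mul_sq hb]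
  field_simp

end Gaussian

/-- Bound on the Gaussian-weighted Gamma integral: for `t₀ ≥ 0` and `h > 0`,
`P(t₀,h) = ∫ |Γ((3+it)/2)| e^{πt/4} e^{-(t-t₀)²/(2h²)} dt ≤ hπ(t₀ + h/√(2π) + 1 + 1/(2√2))`. -/
theorem P_bound (t₀ h : ℝ) (ht₀ : 0 ≤ t₀) (hh : 0 < h) :
    (∫ t : ℝ, ‖Complex.Gamma ((3 + Complex.I * t) / 2)‖ *
        Real.exp (Real.pi * t / 4) * Real.exp (-(t - t₀) ^ 2 / (2 * h ^ 2))) ≤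
      h * Real.pi * (t₀ + h / Real.sqrt (2 * Real.pi) + 1 + 1 / (2 * Real.sqrt 2)) := by
  set c : ℝ := t₀ + 1 + 1 / (2 * √2)
  have hbound (t : ℝ) : ‖Gamma ((3 + I * t) / 2)‖ * Real.exp (π * t / 4) *
      Real.exp (-(t - t₀) ^ 2 / (2 * h ^ 2))
        ≤ √(π / 2) * ((c + max (t - t₀) 0) * Real.exp (-(t - t₀) ^ 2 / (2 * h ^ 2))) := by
    have hmax : max t 0 ≤ t₀ + max (t - t₀) 0 :=
      max_le (by linarith [le_max_left (t - t₀) 0]) (by positivity)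
    rw [← mul_assoc]
    refine mul_le_mul_of_nonneg_right ((norm_Gamma_mul_exp_le t).trans
      (mul_le_mul_of_nonneg_left ?_ (Real.sqrt_nonneg _))) (Real.exp_pos _).le
    linarith
  have hsqrt : √(π / 2) = π / √(2 * π) := by
    rw [eq_div_iff (by positivity), ← Real.sqrt_mul (by positivity),
      show π / 2 * (2 * π) = π ^ 2 by ring, Real.sqrt_sq Real.pi_pos.le]
  calc _ ≤ ∫ t, √(π / 2) * ((c + max (t - t₀) 0) * Real.exp (-(t - t₀) ^ 2 / (2 * h ^ 2))) :=
        integral_mono_of_nonneg (.of_forall fun t => by positivity)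
          ((integrable_add_posPart_mul_gaussian c t₀ hh.ne').const_mul _) (.of_forall hbound)
    _ = √(π / 2) * (c * (h * √(2 * π)) + h ^ 2) := by
        rw [integral_const_mul, integral_add_posPart_mul_gaussian c t₀ hh]
    _ = _ := by
        have : 0 < √(2 * π) := by positivity
        rw [hsqrt]
        simp only [c]
        field_simp
        ring
end
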